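/- arXiv:1108.3055 — 2 statements merged into one kernel-verified Lean document; each statement's English description precedes it below -/
import Mathlib

section
/- Let n ≥ 1 and let J be an index set. In the free group G_n^{*J} with basis {x_{i,j}(α) : 1 ≤ i < j ≤ n+1, α ∈ J}, with face homomorphisms d_t (0 ≤ t ≤ n) defined by the stated formulas, the Moore chain subgroup ⋂_{k=1}^{n} ker(d_k : G_n^{*J} → G_{n-1}^{*J}) equals R[{2, 3, …, n+1}]. -/
/-- The index set of pairs `(i, j)` with `1 ≤ i < j ≤ m`. -/
abbrev PairIdx (m : ℕ) : Type :=
  {p : ℕ × ℕ // 1 ≤ p.1 ∧ p.1 < p.2 ∧ p.2 ≤ m}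

/-- The free group `G_n^{*J}` on the generators `x_{i,j}(α)`, `1 ≤ i < j ≤ n+1`, `α ∈ J`. -/
abbrev FreeGp (n : ℕ) (J : Type) : Type :=
  FreeGroup (PairIdx (n + 1) × J)

/-- The face homomorphism `d_t : G_n^{*J} → G_{n-1}^{*J}` (for `0 ≤ t ≤ n`), defined on the
generators by the formulas: `d_t x_{i,j}(α) = x_{i-1,j-1}(α)` if `t+1 < i`; ` = 1` if `t+1 = i`
or `t+1 = j`; `= x_{i,j-1}(α)` if `i < t+1 < j`; `= x_{i,j}(α)` if `t+1 > j`. -/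
def faceMap (n : ℕ) (J : Type) (t : Fin (n + 1)) :
    FreeGroup (PairIdx (n + 1) × J) →* FreeGroup (PairIdx n × J) :=
  FreeGroup.lift fun q =>
    if h1 : (t : ℕ) + 1 < q.1.1.1 then
      FreeGroup.of (⟨(q.1.1.1 - 1, q.1.1.2 - 1), by
        have hp := q.1.2; have ht := t.isLt; omega⟩, q.2)
    else if h2 : (t : ℕ) + 1 = q.1.1.1 then 1
    else if h3 : (t : ℕ) + 1 < q.1.1.2 then
      FreeGroup.of (⟨(q.1.1.1, q.1.1.2 - 1), by
        have hp := q.1.2; have ht := t.isLt; omega⟩, q.2)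
    else if h4 : (t : ℕ) + 1 = q.1.1.2 then 1
    else FreeGroup.of (⟨(q.1.1.1, q.1.1.2), by
        have hp := q.1.2; have ht := t.isLt; omega⟩, q.2)

/-- The normal closure `R_{i,j}` in `G_n^{*J}` of the set `{x_{i,j}(α) : α ∈ J}`,
for a pair `p = (i, j)` with `1 ≤ i < j ≤ n+1`. -/
def Rpair (n : ℕ) (J : Type) (p : PairIdx (n + 1)) : Subgroup (FreeGp n J) :=
  Subgroup.normalClosure (Set.range fun α : J => FreeGroup.of (p, α))

/-- The left-normed iterated commutator subgroup `[[…[[H₁, H₂], H₃], …], H_m]` of a list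
of subgroups; a singleton list gives the subgroup itself. -/
def iteratedCommutator {G : Type*} [Group G] : List (Subgroup G) → Subgroup G
  | [] => ⊥
  | H :: L => L.foldl (fun A B => ⁅A, B⁆) H

/-- The set of indices occurring among the entries of a list of pairs. -/
def pairsUnion {m : ℕ} (L : List (PairIdx m)) : Set ℕ :=
  {k | ∃ p ∈ L, k = p.1.1 ∨ k = p.1.2}

/-- `R[T]`: the join of all left-normed iterated commutator subgroups
`[[…[[R_{i₁,j₁}, R_{i₂,j₂}], …], R_{i_t,j_t}]` over nonempty finite sequences of pairs such that
every element of `T` occurs among the indices `i₁, j₁, …, i_t, j_t`. -/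
def RT (n : ℕ) (J : Type) (T : Set ℕ) : Subgroup (FreeGp n J) :=
  ⨆ (L : List (PairIdx (n + 1))) (_ : L ≠ []) (_ : T ⊆ pairsUnion L),
    iteratedCommutator (L.map (Rpair n J))

/-! The face `d_t` kills exactly the generators involving the index `t + 1` and relabels the
others injectively, so `ker d_t = ker ρ_{t+1}`, where `ρ_m = killIndex n J m` is the retraction
of the free group killing the generators involving `m`. It therefore suffices to show
`⋂_{m ∈ T} ker ρ_m = R[T]` for finite `T`, by induction on `T`. The key step is that every
`w ∈ R[T]` satisfies `w ≡ ρ_m w` modulo `R[T ∪ {m}]`, so that `ρ_m w = 1` forces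
`w ∈ R[T ∪ {m}]`. This congruence holds on each `R_{i,j}` because `ker ρ_m ≤ R[{m}]`, and it
survives commutators because `[R[S], R[T]] ≤ R[S ∪ T]`, a consequence of the three subgroups
lemma. -/

open scoped commutatorElement

namespace Subgroup

variable {G : Type*} [Group G] {H₁ H₂ H₃ K : Subgroup G} [K.Normal]

theorem commutator_le_iff_le_comap_centralizer :
    ⁅H₁, H₂⁆ ≤ K ↔
      H₁ ≤ (centralizer (H₂.map (QuotientGroup.mk' K))).comap (QuotientGroup.mk' K) := by
  rw [← map_le_iff_le_comap, ← commutator_eq_bot_iff_le_centralizer, ← map_commutator,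
    map_eq_bot_iff, QuotientGroup.ker_mk']

theorem commutator_iSup_le {ι : Sort*} {A : ι → Subgroup G} (h : ∀ i, ⁅A i, H₂⁆ ≤ K) :
    ⁅⨆ i, A i, H₂⁆ ≤ K :=
  commutator_le_iff_le_comap_centralizer.2 <|
    iSup_le fun i => commutator_le_iff_le_comap_centralizer.1 (h i)

theorem commutator_commutator_le_of_rotate (h₁ : ⁅⁅H₂, H₃⁆, H₁⁆ ≤ K)
    (h₂ : ⁅⁅H₃, H₁⁆, H₂⁆ ≤ K) : ⁅⁅H₁, H₂⁆, H₃⁆ ≤ K := by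
  simp only [← QuotientGroup.ker_mk' K, ← map_eq_bot_iff, map_commutator] at h₁ h₂ ⊢
  exact commutator_commutator_eq_bot_of_rotate h₁ h₂

end Subgroup

namespace QuotientGroup

variable {G : Type*} [Group G] {H₁ H₂ K : Subgroup G} [K.Normal]

theorem commute_mk_of_commutator_le (h : ⁅H₁, H₂⁆ ≤ K) {x y : G} (hx : x ∈ H₁) (hy : y ∈ H₂) :
    Commute (x : G ⧸ K) y :=
  commutatorElement_eq_one_iff_commute.1 <|
    (map_commutatorElement (mk' K) x y).symm.trans
      ((eq_one_iff _).2 (h (Subgroup.commutator_mem_commutator hx hy)))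

end QuotientGroup

theorem commutatorElement_mul_mul_of_commute {G : Type*} [Group G] {a b e f : G}
    (heb : Commute e b) (hef : Commute e f) (hfa : Commute f a) : ⁅a * e, b * f⁆ = ⁅a, b⁆ :=
  calc ⁅a * e, b * f⁆ = a * (e * (b * f) * e⁻¹) * a⁻¹ * f⁻¹ * b⁻¹ := by
        simp only [commutatorElement_def]; group
    _ = a * b * (f * a⁻¹ * f⁻¹) * b⁻¹ := by rw [(heb.mul_right hef).mul_inv_cancel]; group
    _ = ⁅a, b⁆ := by rw [hfa.inv_right.mul_inv_cancel, commutatorElement_def]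

section Retraction

variable {G : Type*} [Group G]

def fixedModulo (ρ : G →* G) (N : Subgroup G) [N.Normal] : Subgroup G :=
  (QuotientGroup.mk' N).eqLocus ((QuotientGroup.mk' N).comp ρ)

variable {ρ : G →* G} {N : Subgroup G} [N.Normal]

theorem mem_fixedModulo {g : G} : g ∈ fixedModulo ρ N ↔ g⁻¹ * ρ g ∈ N :=
  QuotientGroup.eq

theorem fixedModulo_mono {N' : Subgroup G} [N'.Normal] (h : N ≤ N') :
    fixedModulo ρ N ≤ fixedModulo ρ N' := fun _ hg =>
  mem_fixedModulo.2 (h (mem_fixedModulo.1 hg))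

/-- For idempotent `ρ`, `ρ g = g * u` with `u ∈ ker ρ`, so `ρ` moves a conjugate `g * s * g⁻¹`
only by the commutator of `s` with `u`. -/
theorem normalClosure_le_fixedModulo (hρ : ∀ g, ρ (ρ g) = ρ g) {S : Set G}
    (hS : S ⊆ fixedModulo ρ N) (hN : ⁅Subgroup.normalClosure S, ρ.ker⁆ ≤ N) :
    Subgroup.normalClosure S ≤ fixedModulo ρ N := by
  refine (Subgroup.closure_le _).2 fun c hc => ?_
  obtain ⟨s, hs, hsc⟩ := Group.mem_conjugatesOfSet_iff.1 hc
  obtain ⟨g, rfl⟩ := isConj_iff.1 hsc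
  obtain ⟨u, hu, hgu⟩ : ∃ u ∈ ρ.ker, ρ g = g * u :=
    ⟨g⁻¹ * ρ g, by simp [MonoidHom.mem_ker, hρ], by group⟩
  have hsu := QuotientGroup.commute_mk_of_commutator_le hN (Subgroup.subset_normalClosure hs) hu
  change ((g * s * g⁻¹ : G) : G ⧸ N) = ((ρ (g * s * g⁻¹) : G) : G ⧸ N)
  rw [map_mul, map_mul, map_inv, hgu]
  have hs' : ((ρ s : G) : G ⧸ N) = s := (hS hs).symm
  simp only [QuotientGroup.mk_mul, QuotientGroup.mk_inv, hs']
  rw [mul_assoc _ (u : G ⧸ N), ← hsu.eq]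
  group

theorem commutator_le_fixedModulo {A B E F : Subgroup G} [E.Normal] [F.Normal]
    (hA : A ≤ fixedModulo ρ E) (hB : B ≤ fixedModulo ρ F)
    (hEB : ⁅E, B⁆ ≤ N) (hAF : ⁅A, F⁆ ≤ N) (hEF : ⁅E, F⁆ ≤ N) :
    ⁅A, B⁆ ≤ fixedModulo ρ N := by
  refine Subgroup.commutator_le.2 fun a ha b hb => ?_
  have he := mem_fixedModulo.1 (hA ha)
  have hf := mem_fixedModulo.1 (hB hb)
  change QuotientGroup.mk' N ⁅a, b⁆ = QuotientGroup.mk' N (ρ ⁅a, b⁆)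
  rw [map_commutatorElement ρ, ← mul_inv_cancel_left a (ρ a), ← mul_inv_cancel_left b (ρ b),
    map_commutatorElement, map_commutatorElement, map_mul, map_mul]
  exact (commutatorElement_mul_mul_of_commute
    (QuotientGroup.commute_mk_of_commutator_le hEB he hb)
    (QuotientGroup.commute_mk_of_commutator_le hEF he hf)
    (QuotientGroup.commute_mk_of_commutator_le hAF ha hf).symm).symm

end Retraction

section IteratedCommutator

variable {G : Type*} [Group G]

theorem iteratedCommutator_append_singleton {L : List (Subgroup G)} (hL : L ≠ [])
    (H : Subgroup G) : iteratedCommutator (L ++ [H]) = ⁅iteratedCommutator L, H⁆ := by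
  obtain ⟨K, L, rfl⟩ := List.exists_cons_of_ne_nil hL
  simp [iteratedCommutator, List.foldl_append]

theorem iteratedCommutator_normal {L : List (Subgroup G)} (hL : ∀ H ∈ L, H.Normal) :
    (iteratedCommutator L).Normal := by
  induction L using List.reverseRecOn with
  | nil => exact Subgroup.normal_bot
  | append_singleton L H ih =>
    have := hL H (by simp)
    rcases eq_or_ne L [] with rfl | hL'
    · exact this
    · have := ih fun K hK => hL K (by simp [hK])
      rw [iteratedCommutator_append_singleton hL']
      infer_instance

theorem iteratedCommutator_le_of_mem {L : List (Subgroup G)} {N : Subgroup G} [N.Normal]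
    {H : Subgroup G} (hH : H ∈ L) (hHN : H ≤ N) : iteratedCommutator L ≤ N := by
  induction L using List.reverseRecOn with
  | nil => simp at hH
  | append_singleton L K ih =>
    rcases eq_or_ne L [] with rfl | hL
    · simp_all [iteratedCommutator]
    rw [iteratedCommutator_append_singleton hL]
    rcases List.mem_append.1 hH with hH | hH
    · exact (Subgroup.commutator_mono (ih hH) le_top).trans (Subgroup.commutator_le_left N ⊤)
    · rw [List.mem_singleton.1 hH] at hHN
      exact (Subgroup.commutator_mono le_top hHN).trans (Subgroup.commutator_le_right ⊤ N)

end IteratedCommutator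

section FreeGroup

variable {n : ℕ} {J : Type}

theorem pairsUnion_append {m : ℕ} (L M : List (PairIdx m)) :
    pairsUnion (L ++ M) = pairsUnion L ∪ pairsUnion M := by
  ext k
  simp [pairsUnion, or_and_right, exists_or]

theorem mem_pairsUnion_singleton {m k : ℕ} {p : PairIdx m} :
    k ∈ pairsUnion [p] ↔ k = p.1.1 ∨ k = p.1.2 := by
  simp [pairsUnion]

abbrev RList (n : ℕ) (J : Type) (L : List (PairIdx (n + 1))) : Subgroup (FreeGp n J) :=
  iteratedCommutator (L.map (Rpair n J))

theorem RList_nil : RList n J [] = ⊥ := rfl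

theorem RList_singleton (p : PairIdx (n + 1)) : RList n J [p] = Rpair n J p := rfl

theorem RList_append_singleton {L : List (PairIdx (n + 1))} (hL : L ≠ []) (q : PairIdx (n + 1)) :
    RList n J (L ++ [q]) = ⁅RList n J L, Rpair n J q⁆ := by
  rw [RList, List.map_append, List.map_singleton,
    iteratedCommutator_append_singleton (List.map_eq_nil_iff.not.2 hL)]

theorem of_mem_Rpair (p : PairIdx (n + 1)) (α : J) : FreeGroup.of (p, α) ∈ Rpair n J p :=
  Subgroup.subset_normalClosure ⟨α, rfl⟩

instance (p : PairIdx (n + 1)) : (Rpair n J p).Normal :=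
  Subgroup.normalClosure_normal

instance (L : List (PairIdx (n + 1))) : (RList n J L).Normal :=
  iteratedCommutator_normal <| by
    simp only [List.mem_map]
    rintro _ ⟨p, -, rfl⟩
    infer_instance

instance (T : Set ℕ) : (RT n J T).Normal :=
  Subgroup.iSup_normal _

theorem RList_le_RT {L : List (PairIdx (n + 1))} (hL : L ≠ []) {T : Set ℕ}
    (hT : T ⊆ pairsUnion L) : RList n J L ≤ RT n J T :=
  le_iSup₂_of_le L hL <| le_iSup_of_le hT le_rfl

theorem RT_le {T : Set ℕ} {K : Subgroup (FreeGp n J)}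
    (h : ∀ L, L ≠ [] → T ⊆ pairsUnion L → RList n J L ≤ K) : RT n J T ≤ K :=
  iSup₂_le fun L hL => iSup_le (h L hL)

theorem RT_anti {T₁ T₂ : Set ℕ} (h : T₁ ⊆ T₂) : RT n J T₂ ≤ RT n J T₁ :=
  RT_le fun _ hL hT => RList_le_RT hL (h.trans hT)

theorem Rpair_le_RT {p : PairIdx (n + 1)} {T : Set ℕ} (hT : T ⊆ pairsUnion [p]) :
    Rpair n J p ≤ RT n J T :=
  RList_le_RT (List.cons_ne_nil _ _) hT

theorem RT_empty : RT n J ∅ = ⊤ := by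
  rw [eq_top_iff, ← FreeGroup.closure_range_of, Subgroup.closure_le]
  rintro _ ⟨⟨p, α⟩, rfl⟩
  exact Rpair_le_RT (Set.empty_subset _) (of_mem_Rpair p α)

theorem commutator_RT_Rpair_le (T : Set ℕ) (q : PairIdx (n + 1)) :
    ⁅RT n J T, Rpair n J q⁆ ≤ RT n J (T ∪ pairsUnion [q]) := by
  refine Subgroup.commutator_iSup_le fun L => Subgroup.commutator_iSup_le fun hL =>
    Subgroup.commutator_iSup_le fun hT => ?_
  rw [← RList_append_singleton hL]
  exact RList_le_RT (by simp) (pairsUnion_append L [q] ▸ Set.union_subset_union_left _ hT)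

theorem commutator_RList_le {L : List (PairIdx (n + 1))} (hL : L ≠ [])
    (M : List (PairIdx (n + 1))) :
    ⁅RList n J L, RList n J M⁆ ≤ RT n J (pairsUnion L ∪ pairsUnion M) := by
  induction M using List.reverseRecOn generalizing L with
  | nil => simp [RList_nil]
  | append_singleton M q ih =>
    rcases eq_or_ne M [] with rfl | hM
    · rw [List.nil_append, RList_singleton, ← RList_append_singleton hL, ← pairsUnion_append]
      exact RList_le_RT (by simp) le_rfl
    rw [RList_append_singleton hM, Subgroup.commutator_comm]
    refine Subgroup.commutator_commutator_le_of_rotate ?_ ?_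
    · rw [Subgroup.commutator_comm (Rpair n J q), ← RList_append_singleton hL]
      refine (ih (by simp)).trans (RT_anti ?_)
      intro k; simp only [pairsUnion_append, Set.mem_union]; tauto
    · refine (Subgroup.commutator_mono (ih hL) le_rfl).trans
        ((commutator_RT_Rpair_le _ q).trans (RT_anti ?_))
      intro k; simp only [pairsUnion_append, Set.mem_union]; tauto

theorem commutator_RT_le (S T : Set ℕ) : ⁅RT n J S, RT n J T⁆ ≤ RT n J (S ∪ T) := by
  refine Subgroup.commutator_iSup_le fun L => Subgroup.commutator_iSup_le fun hL =>
    Subgroup.commutator_iSup_le fun hS => ?_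
  rw [Subgroup.commutator_comm]
  refine Subgroup.commutator_iSup_le fun M => Subgroup.commutator_iSup_le fun _ =>
    Subgroup.commutator_iSup_le fun hT => ?_
  rw [Subgroup.commutator_comm]
  exact (commutator_RList_le hL M).trans (RT_anti (Set.union_subset_union hS hT))

variable (n J) in
def killIndex (m : ℕ) : FreeGp n J →* FreeGp n J :=
  FreeGroup.lift fun q => if m = q.1.1.1 ∨ m = q.1.1.2 then 1 else FreeGroup.of q

theorem killIndex_of (m : ℕ) (p : PairIdx (n + 1)) (α : J) :
    killIndex n J m (FreeGroup.of (p, α)) =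
      if m = p.1.1 ∨ m = p.1.2 then 1 else FreeGroup.of (p, α) :=
  FreeGroup.lift_apply_of

theorem killIndex_killIndex (m : ℕ) (w : FreeGp n J) :
    killIndex n J m (killIndex n J m w) = killIndex n J m w := by
  rw [← MonoidHom.comp_apply]
  congr 1
  refine FreeGroup.ext_hom _ _ fun ⟨p, α⟩ => ?_
  simp only [MonoidHom.comp_apply, killIndex_of]
  split_ifs with h <;> simp [killIndex_of, h]

theorem Rpair_le_ker_killIndex {m : ℕ} {p : PairIdx (n + 1)} (h : m = p.1.1 ∨ m = p.1.2) :
    Rpair n J p ≤ (killIndex n J m).ker := by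
  refine Subgroup.normalClosure_le_normal ?_
  rintro _ ⟨α, rfl⟩
  simp [MonoidHom.mem_ker, killIndex_of, h]

theorem of_mem_fixedModulo_killIndex {m : ℕ} {T : Set ℕ} {p : PairIdx (n + 1)}
    (hT : T ⊆ pairsUnion [p] ∪ {m}) (α : J) :
    FreeGroup.of (p, α) ∈ fixedModulo (killIndex n J m) (RT n J T) := by
  rw [mem_fixedModulo, killIndex_of]
  split_ifs with h
  · refine mul_one (FreeGroup.of (p, α))⁻¹ ▸ inv_mem (Rpair_le_RT ?_ (of_mem_Rpair p α))
    rintro k hk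
    rcases hT hk with hk | rfl
    exacts [hk, mem_pairsUnion_singleton.2 h]
  · exact inv_mul_cancel (FreeGroup.of (p, α)) ▸ one_mem _

theorem ker_killIndex_le_RT (m : ℕ) : (killIndex n J m).ker ≤ RT n J {m} := by
  intro w hw
  have hfix : ⊤ ≤ fixedModulo (killIndex n J m) (RT n J {m}) := by
    rw [← FreeGroup.closure_range_of, Subgroup.closure_le]
    rintro _ ⟨⟨p, α⟩, rfl⟩
    exact of_mem_fixedModulo_killIndex Set.subset_union_right α
  have := mem_fixedModulo.1 (hfix (Subgroup.mem_top w))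
  rwa [hw, mul_one, inv_mem_iff] at this

theorem Rpair_le_fixedModulo (m : ℕ) (q : PairIdx (n + 1)) :
    Rpair n J q ≤ fixedModulo (killIndex n J m) (RT n J (pairsUnion [q] ∪ {m})) :=
  normalClosure_le_fixedModulo (killIndex_killIndex m)
    (by rintro _ ⟨α, rfl⟩; exact of_mem_fixedModulo_killIndex le_rfl α)
    ((Subgroup.commutator_mono (Rpair_le_RT le_rfl) (ker_killIndex_le_RT m)).trans
      (commutator_RT_le _ _))

theorem RList_le_fixedModulo (m : ℕ) {L : List (PairIdx (n + 1))} (hL : L ≠ []) :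
    RList n J L ≤ fixedModulo (killIndex n J m) (RT n J (pairsUnion L ∪ {m})) := by
  induction L using List.reverseRecOn with
  | nil => exact absurd rfl hL
  | append_singleton L q ih =>
    rcases eq_or_ne L [] with rfl | hL
    · exact Rpair_le_fixedModulo m q
    rw [RList_append_singleton hL q]
    refine commutator_le_fixedModulo (ih hL) (Rpair_le_fixedModulo m q) ?_ ?_ ?_
    · refine (Subgroup.commutator_mono le_rfl (Rpair_le_RT le_rfl)).trans
        ((commutator_RT_le _ _).trans (RT_anti ?_))
      intro k; simp only [pairsUnion_append, Set.mem_union]; tauto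
    · refine (Subgroup.commutator_mono (RList_le_RT hL le_rfl) le_rfl).trans
        ((commutator_RT_le _ _).trans (RT_anti ?_))
      intro k; simp only [pairsUnion_append, Set.mem_union]; tauto
    · refine (commutator_RT_le _ _).trans (RT_anti ?_)
      intro k; simp only [pairsUnion_append, Set.mem_union]; tauto

theorem RT_le_fixedModulo (T : Set ℕ) (m : ℕ) :
    RT n J T ≤ fixedModulo (killIndex n J m) (RT n J (insert m T)) :=
  RT_le fun _ hL hT => (RList_le_fixedModulo m hL).trans <| fixedModulo_mono <| RT_anti <|
    Set.insert_subset_iff.2 ⟨Or.inr rfl, hT.trans Set.subset_union_left⟩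

theorem RT_le_ker_killIndex {T : Set ℕ} {m : ℕ} (hm : m ∈ T) :
    RT n J T ≤ (killIndex n J m).ker :=
  RT_le fun _ _ hT =>
    let ⟨_, hp, hpm⟩ := hT hm
    iteratedCommutator_le_of_mem (List.mem_map_of_mem hp) (Rpair_le_ker_killIndex hpm)

theorem iInf_ker_killIndex_le_RT (T : Finset ℕ) :
    ⨅ m ∈ T, (killIndex n J m).ker ≤ RT n J T := by
  induction T using Finset.induction_on with
  | empty => simp [RT_empty]
  | insert m T _ ih =>
    intro w hw
    simp only [Finset.mem_insert, iInf_or, iInf_inf_eq, iInf_iInf_eq_left, Subgroup.mem_inf] at hw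
    have := mem_fixedModulo.1 (RT_le_fixedModulo T m (ih hw.2))
    rw [hw.1, mul_one, inv_mem_iff] at this
    rwa [Finset.coe_insert]

theorem RT_eq_iInf_ker_killIndex (T : Finset ℕ) :
    RT n J T = ⨅ m ∈ T, (killIndex n J m).ker :=
  le_antisymm (le_iInf₂ fun _ hm => RT_le_ker_killIndex hm) (iInf_ker_killIndex_le_RT T)

def insertIndex (t : Fin (n + 1)) (q : PairIdx n) : PairIdx (n + 1) :=
  ⟨(if q.1.1 ≤ t then q.1.1 else q.1.1 + 1, if q.1.2 ≤ t then q.1.2 else q.1.2 + 1), by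
    have := q.2; have := t.isLt; split_ifs <;> omega⟩

variable (J) in
def faceSection (t : Fin (n + 1)) : FreeGroup (PairIdx n × J) →* FreeGp n J :=
  FreeGroup.map fun q => (insertIndex t q.1, q.2)

theorem faceSection_comp_faceMap (t : Fin (n + 1)) :
    (faceSection J t).comp (faceMap n J t) = killIndex n J (t + 1) := by
  refine FreeGroup.ext_hom _ _ fun ⟨⟨⟨i, j⟩, hij⟩, α⟩ => ?_
  have := t.isLt
  simp only at hij
  simp only [MonoidHom.comp_apply, faceMap, FreeGroup.lift_apply_of, killIndex_of]
  split_ifs <;> first | rfl | omega |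
    (simp only [faceSection, FreeGroup.map.of, insertIndex]
     congr 3; ext <;> dsimp only <;> split_ifs <;> omega)

theorem faceMap_comp_killIndex (t : Fin (n + 1)) :
    (faceMap n J t).comp (killIndex n J (t + 1)) = faceMap n J t := by
  refine FreeGroup.ext_hom _ _ fun ⟨⟨⟨i, j⟩, hij⟩, α⟩ => ?_
  simp only [MonoidHom.comp_apply, killIndex_of]
  split_ifs with h
  · simp only [map_one, faceMap, FreeGroup.lift_apply_of]
    split_ifs <;> first | rfl | omega
  · rfl

/-- `d_t` is `ρ_{t+1}` followed by a relabelling of the remaining generators, which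
`faceSection J t` undoes. -/
theorem ker_faceMap (t : Fin (n + 1)) :
    (faceMap n J t).ker = (killIndex n J (t + 1)).ker := by
  apply le_antisymm
  · rw [← faceSection_comp_faceMap, ← MonoidHom.comap_ker]
    exact MonoidHom.ker_le_comap _ _
  · conv_rhs => rw [← faceMap_comp_killIndex, ← MonoidHom.comap_ker]
    exact MonoidHom.ker_le_comap _ _

end FreeGroup

theorem mooreChains_eq_RT_general (n : ℕ) (J : Type) :
    (⨅ k : Fin n, MonoidHom.ker (faceMap n J k.succ)) = RT n J (Set.Icc 2 (n + 1)) := by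
  rw [← Finset.coe_Icc, RT_eq_iInf_ker_killIndex]
  simp_rw [ker_faceMap, Fin.val_succ]
  refine le_antisymm (le_iInf₂ fun m hm => ?_) (le_iInf fun k => iInf₂_le _ ?_)
  · obtain ⟨hm₂, hmn⟩ := Finset.mem_Icc.1 hm
    exact iInf_le_of_le ⟨m - 2, by omega⟩ (le_of_eq (by congr 2; simp only; omega))
  · simp only [Finset.mem_Icc]
    omega

/-- The Moore chain subgroup `⋂_{k=1}^{n} ker(d_k : G_n^{*J} → G_{n-1}^{*J})` equals
`R[{2, 3, …, n+1}]`. -/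
theorem mooreChains_eq_RT (n : ℕ) (hn : 1 ≤ n) (J : Type) :
    (⨅ k : Fin n, MonoidHom.ker (faceMap n J k.succ)) = RT n J (Set.Icc 2 (n + 1)) :=
  mooreChains_eq_RT_general n J
end

section
/- Let n ≥ 1 and let J be an index set. In the free group G_n^{*J}, the subgroup R[{1, 2, …, n+1}] equals the product (join) of the finitely many left-normed iterated commutator subgroups [[…[[R_{i_1,j_1}, R_{i_2,j_2}], …], R_{i_t,j_t}] taken over sequences of pairs (i_1,j_1), …, (i_t,j_t) such that (1) {i_1, j_1, i_2, j_2, …, i_t, j_t} = {1, 2, …, n+1}, and (2) for every 1 ≤ p ≤ t, the union of the pairs with the p-th pair deleted, {i_1, j_1, …, i_t, j_t} ∖ {i_p, j_p} computed by omitting the entries i_p, j_p from the sequence, is not equal to {1, 2, …, n+1}. -/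
/-!
Deleting a term from a left-normed iterated commutator of normal subgroups can only enlarge it,
because `⁅A, K⁆ ≤ A` and `⁅A, K⁆ ≤ K`. So a covering sequence can be pruned, one pair at a time,
to a minimal covering subsequence with a larger iterated commutator; and since all indices lie in
`{1, …, n+1}`, covering this set means having exactly it as the union of the pairs.
-/

section IteratedCommutator

variable {G : Type*} [Group G]

theorem foldl_commutator_mono (L : List (Subgroup G)) {A B : Subgroup G} (h : A ≤ B) :
    L.foldl (fun A B => ⁅A, B⁆) A ≤ L.foldl (fun A B => ⁅A, B⁆) B := by
  induction L generalizing A B with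
  | nil => exact h
  | cons K L ih => exact ih (Subgroup.commutator_mono h le_rfl)

theorem foldl_commutator_le_of_sublist {L L' : List (Subgroup G)} (hL : ∀ H ∈ L, H.Normal)
    (h : L'.Sublist L) (A : Subgroup G) [A.Normal] :
    L.foldl (fun A B => ⁅A, B⁆) A ≤ L'.foldl (fun A B => ⁅A, B⁆) A := by
  induction h generalizing A with
  | slnil => exact le_rfl
  | cons K _ ih =>
    have := hL K List.mem_cons_self
    exact (ih (fun H hH => hL H (List.mem_cons_of_mem _ hH)) ⁅A, K⁆).trans
      (foldl_commutator_mono _ (Subgroup.commutator_le_left A K))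
  | cons_cons K _ ih =>
    have := hL K List.mem_cons_self
    exact ih (fun H hH => hL H (List.mem_cons_of_mem _ hH)) ⁅A, K⁆

theorem iteratedCommutator_le_of_sublist {L L' : List (Subgroup G)} (hL : ∀ H ∈ L, H.Normal)
    (h : L'.Sublist L) (hL' : L' ≠ []) : iteratedCommutator L ≤ iteratedCommutator L' := by
  obtain _ | ⟨H, T⟩ := L
  · exact absurd (List.sublist_nil.mp h) hL'
  have hT : ∀ K ∈ T, K.Normal := fun K hK => hL K (List.mem_cons_of_mem _ hK)
  rcases List.sublist_cons_iff.mp h with hsub | ⟨T', rfl, hsub⟩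
  · obtain _ | ⟨K, T'⟩ := L'
    · exact absurd rfl hL'
    have := hT K (hsub.subset List.mem_cons_self)
    -- The head `H` is dropped: compare both sides with the commutator started at `⊤ ≥ H`.
    calc T.foldl (fun A B => ⁅A, B⁆) H
        ≤ T.foldl (fun A B => ⁅A, B⁆) ⊤ := foldl_commutator_mono T le_top
      _ ≤ (K :: T').foldl (fun A B => ⁅A, B⁆) ⊤ :=
          foldl_commutator_le_of_sublist hT hsub ⊤
      _ ≤ T'.foldl (fun A B => ⁅A, B⁆) K :=
          foldl_commutator_mono T' (Subgroup.commutator_le_right ⊤ K)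
  · have := hL H List.mem_cons_self
    exact foldl_commutator_le_of_sublist hT hsub H

end IteratedCommutator

theorem List.exists_sublist_minimal_eraseIdx {α : Type*} (P : List α → Prop) {L : List α}
    (h : P L) :
    ∃ L' : List α, L'.Sublist L ∧ P L' ∧ ∀ p < L'.length, ¬ P (L'.eraseIdx p) := by
  by_cases hmin : ∀ p < L.length, ¬ P (L.eraseIdx p)
  · exact ⟨L, List.Sublist.refl L, h, hmin⟩
  push Not at hmin
  obtain ⟨p, hp, hP⟩ := hmin
  obtain ⟨L', hsub, hL'⟩ := exists_sublist_minimal_eraseIdx P hP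
  exact ⟨L', hsub.trans (L.eraseIdx_sublist p), hL'⟩
termination_by L.length
decreasing_by rw [List.length_eraseIdx_of_lt hp]; omega

theorem pairsUnion_subset_Icc {m : ℕ} (L : List (PairIdx m)) : pairsUnion L ⊆ Set.Icc 1 m := by
  rintro k ⟨p, -, hk⟩
  have := p.2
  rcases hk with rfl | rfl <;> constructor <;> omega

theorem ne_nil_of_pairsUnion_nonempty {m : ℕ} {L : List (PairIdx m)}
    (h : (pairsUnion L).Nonempty) : L ≠ [] := by
  rintro rfl
  obtain ⟨-, p, hp, -⟩ := h
  exact List.not_mem_nil hp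

theorem iteratedCommutator_Rpair_le_of_sublist {n : ℕ} {J : Type}
    {L L' : List (PairIdx (n + 1))} (h : L'.Sublist L) (hL' : L' ≠ []) :
    iteratedCommutator (L.map (Rpair n J)) ≤ iteratedCommutator (L'.map (Rpair n J)) := by
  refine iteratedCommutator_le_of_sublist ?_ (h.map _) (by simpa using hL')
  rintro H hH
  obtain ⟨p, -, rfl⟩ := List.mem_map.mp hH
  exact Subgroup.normalClosure_normal

theorem RT_eq_reduced_join_general (n : ℕ) (J : Type) :
    RT n J (Set.Icc 1 (n + 1)) =
      ⨆ (L : List (PairIdx (n + 1))) (_ : pairsUnion L = Set.Icc 1 (n + 1))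
        (_ : ∀ p < L.length, pairsUnion (L.eraseIdx p) ≠ Set.Icc 1 (n + 1)),
        iteratedCommutator (L.map (Rpair n J)) := by
  have hIcc : (Set.Icc 1 (n + 1)).Nonempty := Set.nonempty_Icc.mpr (by omega)
  apply le_antisymm
  · refine iSup_le fun L => iSup₂_le fun _ hcov => ?_
    have hL : pairsUnion L = Set.Icc 1 (n + 1) := (pairsUnion_subset_Icc L).antisymm hcov
    obtain ⟨L', hsub, hL', hmin⟩ :=
      List.exists_sublist_minimal_eraseIdx (fun L => pairsUnion L = Set.Icc 1 (n + 1)) hL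
    exact (iteratedCommutator_Rpair_le_of_sublist hsub
      (ne_nil_of_pairsUnion_nonempty (hL' ▸ hIcc))).trans
      (le_iSup₂_of_le L' hL' (le_iSup_of_le hmin le_rfl))
  · refine iSup_le fun L => iSup₂_le fun hL _ => ?_
    exact le_iSup₂_of_le L (ne_nil_of_pairsUnion_nonempty (hL ▸ hIcc))
      (le_iSup_of_le hL.ge le_rfl)

/-- `R[{1, 2, …, n+1}]` equals the join of the left-normed iterated commutator subgroups
`[[…[[R_{i₁,j₁}, R_{i₂,j₂}], …], R_{i_t,j_t}]` over the (finitely many) sequences of pairs whose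
indices fill out exactly `{1, …, n+1}` and such that omitting any one pair of the sequence no
longer fills out `{1, …, n+1}`. -/
theorem RT_eq_reduced_join (n : ℕ) (hn : 1 ≤ n) (J : Type) :
    RT n J (Set.Icc 1 (n + 1)) =
      ⨆ (L : List (PairIdx (n + 1))) (_ : pairsUnion L = Set.Icc 1 (n + 1))
        (_ : ∀ p < L.length, pairsUnion (L.eraseIdx p) ≠ Set.Icc 1 (n + 1)),
        iteratedCommutator (L.map (Rpair n J)) :=
  RT_eq_reduced_join_general n J
end
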